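/- arXiv:0708.1568 — 4 statements merged into one kernel-verified Lean document; each statement's English description precedes it below -/
import Mathlib

section
/- Let v: ℝ → ℝ be C² and define u(S,t) = S·v(log S + a·t) for a ≠ 0 and S > 0. If v satisfies v_z + q·(v_zz + v_z)/(1 - b·(v_zz + v_z))² = 0 with q = σ²/(2a), then u satisfies u_t + (σ²/2)·S²·u_SS/(1 - b·S·u_SS)² = 0. -/
/-!
For `u(S, t) = S v(z)` with `z = log S + a t` one has `u_t = a S v'(z)` and `S u_SS = v''(z) + v'(z)`,
so the left-hand side of the PDE is `a S` times the left-hand side of the ODE, once `σ² / 2 = a q`.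
-/

open Real

lemma deriv_const_mul_comp_const_add_mul (v : ℝ → ℝ) (S c a t : ℝ) :
    deriv (fun τ => S * v (c + a * τ)) t = S * a * deriv v (c + a * t) := by
  have h := deriv_comp_mul_left a (fun y => v (c + y)) t
  rw [deriv_comp_const_add] at h
  simp only [deriv_const_mul_field', h, smul_eq_mul, mul_assoc]

section LogCoordinate

variable {v : ℝ → ℝ} {s : ℝ} (c : ℝ)

lemma hasDerivAt_comp_log_add (hv : Differentiable ℝ v) (hs : 0 < s) :
    HasDerivAt (fun s => v (log s + c)) (deriv v (log s + c) / s) s := by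
  rw [div_eq_mul_inv]
  exact (hv _).hasDerivAt.comp s ((hasDerivAt_log hs.ne').add_const c)

lemma hasDerivAt_mul_comp_log_add (hv : Differentiable ℝ v) (hs : 0 < s) :
    HasDerivAt (fun s => s * v (log s + c)) (v (log s + c) + deriv v (log s + c)) s := by
  refine ((hasDerivAt_id' s).fun_mul (hasDerivAt_comp_log_add c hv hs)).congr_deriv ?_
  field_simp

lemma deriv_deriv_mul_comp_log_add (hv : Differentiable ℝ v) (hv' : Differentiable ℝ (deriv v))
    (hs : 0 < s) :
    deriv (deriv (fun s => s * v (log s + c))) s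
      = (deriv (deriv v) (log s + c) + deriv v (log s + c)) / s := by
  have hderiv : deriv (fun s => s * v (log s + c))
      =ᶠ[nhds s] fun s => v (log s + c) + deriv v (log s + c) := by
    filter_upwards [eventually_gt_nhds hs] with r hr
    exact (hasDerivAt_mul_comp_log_add c hv hr).deriv
  rw [hderiv.deriv_eq,
    ((hasDerivAt_comp_log_add c hv hs).fun_add (hasDerivAt_comp_log_add c hv' hs)).deriv]
  ring

end LogCoordinate

theorem stmt4_general (σ a b q : ℝ) (ha : a ≠ 0)
    (hq : q = σ ^ 2 / (2 * a))
    (v : ℝ → ℝ) (hv : ContDiff ℝ 2 v)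
    (hode : ∀ z : ℝ,
      deriv v z + q * (deriv (deriv v) z + deriv v z)
        / (1 - b * (deriv (deriv v) z + deriv v z)) ^ 2 = 0) :
    ∀ t S : ℝ, 0 < S →
      deriv (fun τ => S * v (Real.log S + a * τ)) t
        + σ ^ 2 / 2 * S ^ 2 * deriv (deriv (fun s => s * v (Real.log s + a * t))) S
          / (1 - b * S * deriv (deriv (fun s => s * v (Real.log s + a * t))) S) ^ 2 = 0 := by
  intro t S hS
  have hv1 : Differentiable ℝ v := hv.differentiable two_ne_zero
  have hv2 : Differentiable ℝ (deriv v) :=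
    (contDiff_succ_iff_deriv.mp (show ContDiff ℝ (1 + 1) v from hv)).2.2.differentiable one_ne_zero
  rw [deriv_const_mul_comp_const_add_mul, deriv_deriv_mul_comp_log_add _ hv1 hv2 hS]
  set z := log S + a * t
  set W := deriv (deriv v) z + deriv v z
  have hnum : σ ^ 2 / 2 * S ^ 2 * (W / S) = S * a * (q * W) := by rw [hq]; field_simp
  have hden : b * S * (W / S) = b * W := by field_simp
  rw [hnum, hden]
  linear_combination (S * a) * hode z

/-- Reduction of the nonlinear Black–Scholes PDE (case `k = 0`) to an ODE via the
invariant variables `z = log S + a t`, `v = u / S`: if `v` solves the reduced ODE,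
then `u(t,S) = S v(log S + a t)` solves the PDE. -/
theorem stmt4 (σ a b q : ℝ) (hσ : 0 < σ) (ha : a ≠ 0) (hb : b ≠ 0)
    (hq : q = σ ^ 2 / (2 * a))
    (v : ℝ → ℝ) (hv : ContDiff ℝ 2 v)
    (hode : ∀ z : ℝ,
      deriv v z + q * (deriv (deriv v) z + deriv v z)
        / (1 - b * (deriv (deriv v) z + deriv v z)) ^ 2 = 0) :
    ∀ t S : ℝ, 0 < S →
      deriv (fun τ => S * v (Real.log S + a * τ)) t
        + σ ^ 2 / 2 * S ^ 2 * deriv (deriv (fun s => s * v (Real.log s + a * t))) S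
          / (1 - b * S * deriv (deriv (fun s => s * v (Real.log s + a * t))) S) ^ 2 = 0 :=
  stmt4_general σ a b q ha hq v hv hode
end

section
/- Define v(z) = -(1/b)·A(z)^{-2/3} - (1/b)·A(z)^{2/3} - (2/b)·log(A(z)^{-1/3} + A(z)^{1/3} - 2) + d, where A(z) = 1 + c·e^{-3z/2} + √(2c·e^{-3z/2} + c²·e^{-3z}), with constants c > 0, b ≠ 0, d ∈ ℝ. Then v'(z) = (1/b)·(1 + A(z)^{-2/3} + A(z)^{2/3}) for all z ∈ ℝ. -/
/-!
Put `u = c e^{-3z/2}`. Then `A = 1 + u + √(2u + u²)` is the larger root of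
`X² - 2(1 + u) X + 1`, so `u (A + 1) = √(2u + u²) (A - 1)` and `A' = -(3/2) A (A - 1) / (A + 1)`.
In `s = A^{1/3}` the function `v` is `-(s⁻² + s² + 2 log ((s - 1)² / s)) / b + d`, and the chain
rule reduces the claim to the factorisation `s⁴ + s² + 1 = (s² + s + 1) (s² - s + 1)`.
-/

noncomputable def Afun (c z : ℝ) : ℝ :=
  1 + c * Real.exp (-3 * z / 2)
    + Real.sqrt (2 * c * Real.exp (-3 * z / 2) + c ^ 2 * Real.exp (-3 * z))

open Real

noncomputable def largerRoot (u : ℝ) : ℝ := 1 + u + √(2 * u + u ^ 2)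

lemma one_lt_largerRoot {u : ℝ} (hu : 0 < u) : 1 < largerRoot u := by
  have := sqrt_nonneg (2 * u + u ^ 2)
  rw [largerRoot]; linarith

lemma hasDerivAt_largerRoot {u : ℝ} (hu : 0 < u) :
    HasDerivAt largerRoot (largerRoot u / √(2 * u + u ^ 2)) u := by
  have hpos : 0 < 2 * u + u ^ 2 := by positivity
  have hr := (sqrt_pos.2 hpos).ne'
  have h : HasDerivAt (fun v => 2 * v + v ^ 2) (2 + 2 * u) u :=
    (((hasDerivAt_id' u).const_mul 2).add (hasDerivAt_pow 2 u)).congr_deriv (by ring)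
  refine (((hasDerivAt_id u).const_add 1).add (h.sqrt hpos.ne')).congr_deriv ?_
  simp only [largerRoot]
  field_simp
  ring

lemma Afun_eq_largerRoot (c z : ℝ) : Afun c z = largerRoot (c * exp (-3 * z / 2)) := by
  have h : exp (-3 * z) = exp (-3 * z / 2) ^ 2 := by rw [← exp_nat_mul]; ring_nf
  rw [Afun, largerRoot, h]
  ring_nf

lemma one_lt_Afun {c : ℝ} (hc : 0 < c) (z : ℝ) : 1 < Afun c z := by
  rw [Afun_eq_largerRoot]
  exact one_lt_largerRoot (by positivity)

lemma hasDerivAt_Afun {c : ℝ} (hc : 0 < c) (z : ℝ) :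
    HasDerivAt (Afun c) (-(3 / 2) * Afun c z * (Afun c z - 1) / (Afun c z + 1)) z := by
  have hexp :
      HasDerivAt (fun z => c * exp (-3 * z / 2)) (c * exp (-3 * z / 2) * (-3 / 2)) z := by
    simpa [mul_assoc] using (((hasDerivAt_id z).const_mul (-3)).div_const 2).exp.const_mul c
  rw [show Afun c = largerRoot ∘ fun z => c * exp (-3 * z / 2) from
    funext (Afun_eq_largerRoot c), Function.comp_apply]
  have hu : 0 < c * exp (-3 * z / 2) := by positivity
  refine ((hasDerivAt_largerRoot hu).comp z hexp).congr_deriv ?_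
  generalize c * exp (-3 * z / 2) = u at hu ⊢
  have hr : 0 < √(2 * u + u ^ 2) := sqrt_pos.2 (by positivity)
  have hsq : √(2 * u + u ^ 2) ^ 2 = 2 * u + u ^ 2 := sq_sqrt (by positivity)
  have hA : 0 < largerRoot u + 1 := by linarith [one_lt_largerRoot hu]
  rw [div_mul_eq_mul_div, div_eq_div_iff hr.ne' hA.ne']
  simp only [largerRoot]
  linear_combination (3 / 2) * (1 + u + √(2 * u + u ^ 2)) * hsq

lemma rpow_one_third_pow_three {a : ℝ} (ha : 0 ≤ a) : (a ^ (1 / 3 : ℝ)) ^ 3 = a := by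
  simpa using rpow_inv_natCast_pow ha (n := 3) (by norm_num)

lemma rpow_two_div_three {a : ℝ} (ha : 0 ≤ a) :
    a ^ ((2 : ℝ) / 3) = (a ^ (1 / 3 : ℝ)) ^ 2 := by
  rw [← rpow_natCast, ← rpow_mul ha]
  norm_num

lemma hasDerivAt_cbrt_Afun {c : ℝ} (hc : 0 < c) (z : ℝ) :
    HasDerivAt (fun z => Afun c z ^ (1 / 3 : ℝ))
      (-(1 / 2) * Afun c z ^ (1 / 3 : ℝ) * ((Afun c z ^ (1 / 3 : ℝ)) ^ 3 - 1)
        / ((Afun c z ^ (1 / 3 : ℝ)) ^ 3 + 1)) z := by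
  have hA := one_lt_Afun hc z
  refine ((hasDerivAt_Afun hc z).rpow_const (Or.inl (by positivity))).congr_deriv ?_
  rw [rpow_one_third_pow_three (by positivity), rpow_sub_one (by positivity)]
  have : Afun c z + 1 ≠ 0 := by positivity
  field_simp

noncomputable def vOfCbrt (b d s : ℝ) : ℝ :=
  -(1 / b) * (s ^ 2)⁻¹ - (1 / b) * s ^ 2 - (2 / b) * log (s⁻¹ + s - 2) + d

lemma hasDerivAt_vOfCbrt (b d : ℝ) {s : ℝ} (hs : 1 < s) :
    HasDerivAt (vOfCbrt b d) (-(2 / b) * (s ^ 3 + 1) * (s ^ 2 - s + 1) / (s ^ 3 * (s - 1))) s := by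
  have hs0 : s ≠ 0 := by positivity
  have hs1 : s - 1 ≠ 0 := by linarith
  have hlog : s⁻¹ + s - 2 = (s - 1) ^ 2 / s := by field_simp; ring
  have hlog0 : s⁻¹ + s - 2 ≠ 0 := by rw [hlog]; positivity
  have h := ((((hasDerivAt_pow 2 s).inv (by positivity)).const_mul (-(1 / b))).sub
    ((hasDerivAt_pow 2 s).const_mul (1 / b))).sub
    (((((hasDerivAt_inv hs0).add (hasDerivAt_id' s)).sub_const 2).log hlog0).const_mul (2 / b))
  refine (h.add_const d).congr_deriv ?_
  simp only [Pi.add_apply]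
  rw [hlog]
  field_simp
  ring

lemma vOfCbrt_rpow_one_third (b d : ℝ) {a : ℝ} (ha : 0 ≤ a) :
    vOfCbrt b d (a ^ (1 / 3 : ℝ)) =
      -(1 / b) * a ^ (-(2 : ℝ) / 3) - (1 / b) * a ^ ((2 : ℝ) / 3)
        - (2 / b) * log (a ^ (-(1 : ℝ) / 3) + a ^ ((1 : ℝ) / 3) - 2) + d := by
  rw [vOfCbrt, neg_div, neg_div, rpow_neg ha, rpow_neg ha, rpow_two_div_three ha]

theorem stmt15_general (b c d : ℝ) (hc : 0 < c) :
    ∀ z : ℝ,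
      deriv (fun z' =>
        -(1 / b) * (Afun c z') ^ (-(2 : ℝ) / 3)
          - (1 / b) * (Afun c z') ^ ((2 : ℝ) / 3)
          - (2 / b) * Real.log ((Afun c z') ^ (-(1 : ℝ) / 3)
              + (Afun c z') ^ ((1 : ℝ) / 3) - 2)
          + d) z
      = (1 / b) * (1 + (Afun c z) ^ (-(2 : ℝ) / 3) + (Afun c z) ^ ((2 : ℝ) / 3)) := by
  intro z
  have hA : ∀ z', 0 ≤ Afun c z' := fun z' => zero_le_one.trans (one_lt_Afun hc z').le
  simp only [← fun z' => vOfCbrt_rpow_one_third b d (hA z')]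
  have hs : 1 < Afun c z ^ (1 / 3 : ℝ) := one_lt_rpow (one_lt_Afun hc z) (by norm_num)
  refine ((hasDerivAt_vOfCbrt b d hs).comp z (hasDerivAt_cbrt_Afun hc z)).deriv.trans ?_
  rw [neg_div, rpow_neg (hA z), rpow_two_div_three (hA z)]
  generalize Afun c z ^ (1 / 3 : ℝ) = s at hs ⊢
  have : s - 1 ≠ 0 := by linarith
  field_simp
  ring

/-- The explicit formula (solvzplus) is an antiderivative of the right-hand side
of the ODE (reshv) from the exactly integrable case `q = -4`. -/
theorem stmt15 (b c d : ℝ) (hb : b ≠ 0) (hc : 0 < c) :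
    ∀ z : ℝ,
      deriv (fun z' =>
        -(1 / b) * (Afun c z') ^ (-(2 : ℝ) / 3)
          - (1 / b) * (Afun c z') ^ ((2 : ℝ) / 3)
          - (2 / b) * Real.log ((Afun c z') ^ (-(1 : ℝ) / 3)
              + (Afun c z') ^ ((1 : ℝ) / 3) - 2)
          + d) z
      = (1 / b) * (1 + (Afun c z) ^ (-(2 : ℝ) / 3) + (Afun c z) ^ ((2 : ℝ) / 3)) :=
  stmt15_general b c d hc
end

section
/- Let c > 0, b ≠ 0 and set A(z) = 1 + c·e^{-3z/2} + √(2c·e^{-3z/2} + c²·e^{-3z}), p(z) = A(z)^{1/3} + A(z)^{-1/3}, v_z(z) = (1/b)(1 + A(z)^{-2/3} + A(z)^{2/3}). Then y(z) := v_z(z) satisfies the implicit ODE y·y_z² + 2·(y² - y/b - 2/b²)·y_z + (y² - 2y/b - 3/b²)·y = 0 (the case ξ = 1, q = -4). -/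
/-- `v_z = (1/b)(1 + A^{-2/3} + A^{2/3})`. -/
noncomputable def yfun (b c z : ℝ) : ℝ :=
  (1 / b) * (1 + (Afun c z) ^ (-(2 : ℝ) / 3) + (Afun c z) ^ ((2 : ℝ) / 3))

lemma Afun_gt_one (c : ℝ) (hc : 0 < c) (z : ℝ) : 1 < Afun c z := by
  have he : (0:ℝ) < Real.exp (-3 * z / 2) := Real.exp_pos _
  have hs : 0 ≤ Real.sqrt (2 * c * Real.exp (-3 * z / 2) + c ^ 2 * Real.exp (-3 * z)) :=
    Real.sqrt_nonneg _
  rw [Afun]; nlinarith [mul_pos hc he]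

lemma Afun_deriv (c : ℝ) (hc : 0 < c) (z : ℝ) :
    HasDerivAt (Afun c) (-3 * Afun c z * (Afun c z - 1) / (2 * (Afun c z + 1))) z := by
  have he : (0:ℝ) < Real.exp (-3 * z / 2) := Real.exp_pos _
  have he2 : Real.exp (-3 * z) = (Real.exp (-3 * z / 2)) ^ 2 := by
    rw [← Real.exp_nat_mul]; ring_nf
  have hg : 0 < 2 * c * Real.exp (-3 * z / 2) + c ^ 2 * Real.exp (-3 * z) := by
    rw [he2]; positivity
  have h1 : HasDerivAt (fun z : ℝ => -3 * z / 2) (-3/2) z := by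
    simpa using ((hasDerivAt_id z).const_mul (-3 : ℝ)).div_const 2
  have hde : HasDerivAt (fun z : ℝ => Real.exp (-3 * z / 2))
      (Real.exp (-3 * z / 2) * (-3/2)) z := h1.exp
  have h2 : HasDerivAt (fun z : ℝ => -3 * z) (-3 : ℝ) z := by
    simpa using (hasDerivAt_id z).const_mul (-3 : ℝ)
  have hde2 : HasDerivAt (fun z : ℝ => Real.exp (-3 * z))
      (Real.exp (-3 * z) * (-3)) z := h2.exp
  have hdg : HasDerivAt (fun z : ℝ => 2 * c * Real.exp (-3 * z / 2) + c ^ 2 * Real.exp (-3 * z))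
      (2 * c * (Real.exp (-3 * z / 2) * (-3/2)) + c ^ 2 * (Real.exp (-3 * z) * (-3))) z :=
    (hde.const_mul (2 * c)).add (hde2.const_mul (c ^ 2))
  have hdA : HasDerivAt (Afun c)
      (c * (Real.exp (-3 * z / 2) * (-3/2))
        + (2 * c * (Real.exp (-3 * z / 2) * (-3/2)) + c ^ 2 * (Real.exp (-3 * z) * (-3)))
          / (2 * Real.sqrt (2 * c * Real.exp (-3 * z / 2) + c ^ 2 * Real.exp (-3 * z)))) z := by
    unfold Afun
    exact ((hde.const_mul c).const_add 1).add (hdg.sqrt hg.ne')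
  convert hdA using 1
  set e : ℝ := Real.exp (-3 * z / 2) with he_def
  set s : ℝ := Real.sqrt (2 * c * e + c ^ 2 * Real.exp (-3 * z)) with hs_def
  have hgs : 2 * c * e + c ^ 2 * Real.exp (-3 * z) = 2 * c * e + c ^ 2 * e ^ 2 := by rw [he2]
  have hspos : 0 < s := Real.sqrt_pos.mpr hg
  have hs2 : s ^ 2 = 2 * c * e + c ^ 2 * e ^ 2 := by
    rw [hs_def, Real.sq_sqrt hg.le, hgs]
  have hA : Afun c z = 1 + c * e + s := by rw [Afun]
  set A : ℝ := Afun c z with hA_def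
  have hA1 : 1 < A := by rw [hA]; nlinarith [hspos, mul_pos hc he]
  have hsA : s = A - 1 - c * e := by rw [hA]; ring
  have hce : 2 * A * (c * e) = (A - 1) ^ 2 := by
    have h := hs2; rw [hsA] at h; nlinarith [h]
  have hsval : 2 * A * s = (A - 1) * (A + 1) := by
    linear_combination 2 * A * hsA - hce
  have hA0 : (0:ℝ) < A := by linarith
  rw [he2]
  field_simp
  nlinarith [hce, hsval, sq_nonneg A, sq_nonneg s]

/-- The explicit solution satisfies the polynomial first-order ODE obtained from
the reduced nonlinear Black–Scholes equation with `q = -4`, `ξ = 1`. -/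
theorem stmt16 (b c : ℝ) (hb : b ≠ 0) (hc : 0 < c) :
    ∀ z : ℝ,
      yfun b c z * (deriv (yfun b c) z) ^ 2
        + 2 * ((yfun b c z) ^ 2 - yfun b c z / b - 2 / b ^ 2) * deriv (yfun b c) z
        + ((yfun b c z) ^ 2 - 2 * yfun b c z / b - 3 / b ^ 2) * yfun b c z = 0 := by
  intro z
  have hA1 : 1 < Afun c z := Afun_gt_one c hc z
  have hA0 : (0:ℝ) < Afun c z := by linarith
  have hdA := Afun_deriv c hc z
  set A : ℝ := Afun c z with hA_def
  set A' : ℝ := -3 * A * (A - 1) / (2 * (A + 1)) with hA'_def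
  have hy : HasDerivAt (yfun b c)
      ((1/b) * ((A' * (-(2:ℝ)/3) * A ^ (-(2:ℝ)/3 - 1)) + (A' * ((2:ℝ)/3) * A ^ ((2:ℝ)/3 - 1)))) z := by
    have h1 := (hdA.rpow_const (p := -(2:ℝ)/3) (Or.inl hA0.ne'))
    have h2 := (hdA.rpow_const (p := (2:ℝ)/3) (Or.inl hA0.ne'))
    have := (((h1.const_add 1).add h2).const_mul (1/b))
    exact this
  rw [hy.deriv]
  set u : ℝ := A ^ ((2:ℝ)/3) with hu_def
  have hu : 0 < u := Real.rpow_pos_of_pos hA0 _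
  have hinv : A ^ (-(2:ℝ)/3) = u⁻¹ := by
    rw [show (-(2:ℝ)/3) = -((2:ℝ)/3) by norm_num, Real.rpow_neg hA0.le]
  have h2 : A ^ ((2:ℝ)/3 - 1) = u / A := by
    rw [show ((2:ℝ)/3 - 1) = (2:ℝ)/3 + (-1) by norm_num, Real.rpow_add hA0,
      Real.rpow_neg_one]
    ring
  have h3 : A ^ (-(2:ℝ)/3 - 1) = 1 / (u * A) := by
    rw [show (-(2:ℝ)/3 - 1) = -((2:ℝ)/3) + (-1) by norm_num, Real.rpow_add hA0,
      Real.rpow_neg hA0.le, Real.rpow_neg_one]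
    field_simp
    exact hu_def
  have hu3 : u ^ 3 = A ^ 2 := by
    rw [hu_def, ← Real.rpow_natCast (A ^ ((2:ℝ)/3)) 3, ← Real.rpow_mul hA0.le,
      ← Real.rpow_natCast A 2]
    norm_num
  have hyv : yfun b c z = (1/b) * (1 + u⁻¹ + u) := by
    rw [yfun, ← hA_def, hinv, hu_def]
  rw [hyv, h2, h3, hA'_def]
  have hA1' : A + 1 ≠ 0 := by positivity
  field_simp
  linear_combination (4 * (1 + u) * (u ^ 2 - 1)) * hu3
end

section
/- For b ≠ 0 and σ > 0, the functions u(S,t) = d·S, u(S,t) = (3/b)·S·(log S - σ²t/8), and u(S,t) = -(1/b)·S·(log S - σ²t/8) (d ∈ ℝ arbitrary) are exact solutions of the PDE u_t + (σ²/2)·S²·u_SS/(1 - b·S·u_SS)² = 0 on S > 0, provided the denominator 1 - b·S·u_SS does not vanish; explicitly, for the second solution 1 - b·S·u_SS = -2 and for the third 1 - b·S·u_SS = 2 for all S > 0. -/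
open Real Topology

lemma deriv_deriv_mul_mul_log_sub (c k : ℝ) {S : ℝ} (hS : 0 < S) :
    deriv (deriv fun s => c * s * (log s - k)) S = c / S := by
  have hfirst : deriv (fun s => c * s * (log s - k)) =ᶠ[𝓝 S] fun s => c * (log s - k) + c := by
    filter_upwards [eventually_gt_nhds hS] with s hs
    have h : HasDerivAt (fun s => c * s * (log s - k)) (c * 1 * (log s - k) + c * s * s⁻¹) s :=
      ((hasDerivAt_id' s).const_mul c).mul ((hasDerivAt_log hs.ne').sub_const k)
    rw [h.deriv]
    field_simp
  rw [hfirst.deriv_eq, (((hasDerivAt_log hS.ne').sub_const k).const_mul c).add_const c |>.deriv,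
    div_eq_mul_inv]

lemma one_sub_mul_mul_deriv_deriv_mul_mul_log_sub (b c k : ℝ) {S : ℝ} (hS : 0 < S) :
    1 - b * S * deriv (deriv fun s => c * s * (log s - k)) S = 1 - b * c := by
  rw [deriv_deriv_mul_mul_log_sub c k hS]
  field_simp

lemma deriv_mul_sub_mul_div_eight (A L m t : ℝ) :
    deriv (fun τ => A * (L - m * τ / 8)) t = -(A * m / 8) := by
  have h := (((hasDerivAt_id' t).const_mul m).div_const 8).const_sub L |>.const_mul A
  rw [h.deriv]
  ring

/-- With `u = c S (log S - σ²t/8)` one has `u_t = -cσ²S/8`, `S² u_SS = cS` and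
`1 - b S u_SS = 1 - bc`, so the residual is `(cσ²S/8) (4/(1 - bc)² - 1)`. -/
theorem mul_mul_log_sub_solves (b σ c t : ℝ) {S : ℝ} (hS : 0 < S) (hc : (1 - b * c) ^ 2 = 4) :
    deriv (fun τ => c * S * (log S - σ ^ 2 * τ / 8)) t
      + σ ^ 2 / 2 * S ^ 2 * deriv (deriv fun s => c * s * (log s - σ ^ 2 * t / 8)) S
        / (1 - b * S * deriv (deriv fun s => c * s * (log s - σ ^ 2 * t / 8)) S) ^ 2 = 0 := by
  rw [deriv_mul_sub_mul_div_eight, one_sub_mul_mul_deriv_deriv_mul_mul_log_sub b c _ hS,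
    deriv_deriv_mul_mul_log_sub c _ hS, hc]
  field_simp
  ring

theorem stmt17_general (b σ d : ℝ) (hb : b ≠ 0) :
    (∀ t S : ℝ, 0 < S →
      deriv (fun τ : ℝ => d * S) t
        + σ ^ 2 / 2 * S ^ 2 * deriv (deriv (fun s => d * s)) S
          / (1 - b * S * deriv (deriv (fun s => d * s)) S) ^ 2 = 0)
    ∧ (∀ t S : ℝ, 0 < S →
      1 - b * S * deriv (deriv (fun s => 3 / b * s * (Real.log s - σ ^ 2 * t / 8))) S = -2)
    ∧ (∀ t S : ℝ, 0 < S →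
      deriv (fun τ => 3 / b * S * (Real.log S - σ ^ 2 * τ / 8)) t
        + σ ^ 2 / 2 * S ^ 2
            * deriv (deriv (fun s => 3 / b * s * (Real.log s - σ ^ 2 * t / 8))) S
          / (1 - b * S
              * deriv (deriv (fun s => 3 / b * s * (Real.log s - σ ^ 2 * t / 8))) S) ^ 2 = 0)
    ∧ (∀ t S : ℝ, 0 < S →
      1 - b * S * deriv (deriv (fun s => -(1 / b) * s * (Real.log s - σ ^ 2 * t / 8))) S = 2)
    ∧ (∀ t S : ℝ, 0 < S →
      deriv (fun τ => -(1 / b) * S * (Real.log S - σ ^ 2 * τ / 8)) t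
        + σ ^ 2 / 2 * S ^ 2
            * deriv (deriv (fun s => -(1 / b) * s * (Real.log s - σ ^ 2 * t / 8))) S
          / (1 - b * S
              * deriv (deriv (fun s => -(1 / b) * s * (Real.log s - σ ^ 2 * t / 8))) S) ^ 2
        = 0) := by
  have h3 : 1 - b * (3 / b) = -2 := by field_simp; ring
  have h1 : 1 - b * -(1 / b) = 2 := by field_simp; ring
  refine ⟨fun t S _ => by simp, fun t S hS => ?_, fun t S hS => ?_, fun t S hS => ?_,
    fun t S hS => ?_⟩
  · rw [one_sub_mul_mul_deriv_deriv_mul_mul_log_sub b _ _ hS, h3]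
  · exact mul_mul_log_sub_solves b σ _ t hS (by rw [h3]; norm_num)
  · rw [one_sub_mul_mul_deriv_deriv_mul_mul_log_sub b _ _ hS, h1]
  · exact mul_mul_log_sub_solves b σ _ t hS (by rw [h1]; norm_num)

/-- The trivially-invariant exact solutions `d·S`, `(3/b)S(log S - σ²t/8)` and
`-(1/b)S(log S - σ²t/8)` of the nonlinear Black–Scholes equation, together with
the values of the denominator `1 - bSu_SS`. -/
theorem stmt17 (b σ d : ℝ) (hb : b ≠ 0) (hσ : 0 < σ) :
    (∀ t S : ℝ, 0 < S →
      deriv (fun τ : ℝ => d * S) t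
        + σ ^ 2 / 2 * S ^ 2 * deriv (deriv (fun s => d * s)) S
          / (1 - b * S * deriv (deriv (fun s => d * s)) S) ^ 2 = 0)
    ∧ (∀ t S : ℝ, 0 < S →
      1 - b * S * deriv (deriv (fun s => 3 / b * s * (Real.log s - σ ^ 2 * t / 8))) S = -2)
    ∧ (∀ t S : ℝ, 0 < S →
      deriv (fun τ => 3 / b * S * (Real.log S - σ ^ 2 * τ / 8)) t
        + σ ^ 2 / 2 * S ^ 2
            * deriv (deriv (fun s => 3 / b * s * (Real.log s - σ ^ 2 * t / 8))) S
          / (1 - b * S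
              * deriv (deriv (fun s => 3 / b * s * (Real.log s - σ ^ 2 * t / 8))) S) ^ 2 = 0)
    ∧ (∀ t S : ℝ, 0 < S →
      1 - b * S * deriv (deriv (fun s => -(1 / b) * s * (Real.log s - σ ^ 2 * t / 8))) S = 2)
    ∧ (∀ t S : ℝ, 0 < S →
      deriv (fun τ => -(1 / b) * S * (Real.log S - σ ^ 2 * τ / 8)) t
        + σ ^ 2 / 2 * S ^ 2
            * deriv (deriv (fun s => -(1 / b) * s * (Real.log s - σ ^ 2 * t / 8))) S
          / (1 - b * S
              * deriv (deriv (fun s => -(1 / b) * s * (Real.log s - σ ^ 2 * t / 8))) S) ^ 2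
        = 0) :=
  stmt17_general b σ d hb
end
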